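/- For integers k ≥ 2 and n ≥ 2k, every non-trivial intersecting family F of stable k-subsets of {1,...,n} satisfies |F| ≤ k² · C(n-k-2, k-2). -/

import Mathlib

open Finset

attribute [local instance] Classical.propDecidable

/-- `A` is a stable subset of `{1,...,n}`: no two cyclically consecutive elements. -/
def Stable (n : ℕ) (A : Finset ℕ) : Prop :=
  (∀ i ∈ A, i + 1 ∉ A) ∧ ¬(1 ∈ A ∧ n ∈ A)

/-- The collection of stable `k`-subsets of `{1,...,n}`. -/
noncomputable def stableSets (n k : ℕ) : Finset (Finset ℕ) :=
  ((Finset.Icc 1 n).powersetCard k).filter (fun A => Stable n A)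

/-! Pick `A ∈ F` and, for each `x ∈ A`, a member of `F` avoiding `x`. Every member of `F`
then contains some `x ∈ A` together with some `y ≠ x` from the member avoiding `x`, so `|F|` is
at most `k²` times the number of stable `k`-sets through two given points. For such sets,
cutting the cycle open at `x` and deleting `y` with its two neighbours leaves `k - 2` points,
no two consecutive, in an interval of length `n - 5`; subtracting from each point the number
of points before it turns these injectively into `(k - 2)`-subsets of an interval of length
`n - k - 2`. -/

def Sparse (S : Finset ℕ) : Prop :=
  ∀ s ∈ S, s + 1 ∉ S

def compressAt (S : Finset ℕ) (s : ℕ) : ℕ :=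
  s - #{t ∈ S | t < s}

def compress (S : Finset ℕ) : Finset ℕ :=
  S.image (compressAt S)

section Sparse

variable {S : Finset ℕ}

lemma card_filter_lt_le (s : ℕ) : #{t ∈ S | t < s} ≤ s := by
  simpa using card_le_card (show {t ∈ S | t < s} ⊆ range s from fun t ht => by
    simp only [mem_filter] at ht; simpa using ht.2)

lemma Sparse.compressAt_strictMonoOn (hS : Sparse S) : StrictMonoOn (compressAt S) S := by
  intro u hu v hv huv
  have hbelow : {t ∈ S | t < v} ⊆ {t ∈ S | t < u} ∪ Ico u (v - 1) := by
    intro t ht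
    simp only [mem_filter] at ht
    have : t + 1 ≠ v := fun h => hS t ht.1 (h ▸ hv)
    simp only [mem_union, mem_filter, mem_Ico, ht.1, true_and]
    omega
  have hrank := (card_le_card hbelow).trans (card_union_le _ _)
  have := card_filter_lt_le (S := S) u
  simp only [Nat.card_Ico] at hrank
  unfold compressAt
  omega

lemma Sparse.card_compress (hS : Sparse S) : #(compress S) = #S :=
  card_image_of_injOn hS.compressAt_strictMonoOn.injOn

lemma compress_subset_Ico {lo hi : ℕ} (hSsub : S ⊆ Ico lo hi) :
    compress S ⊆ Ico lo (hi + 1 - #S) := by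
  intro t ht
  obtain ⟨s, hs, rfl⟩ := mem_image.mp ht
  have hlo : #{t ∈ S | t < s} ≤ s - lo := by
    simpa using card_le_card (show {t ∈ S | t < s} ⊆ Ico lo s from fun t ht => by
      simp only [mem_filter] at ht; simpa [ht.2] using (mem_Ico.mp (hSsub ht.1)).1)
  have hhi : #{t ∈ S | ¬ t < s} ≤ hi - s := by
    simpa using card_le_card (show {t ∈ S | ¬ t < s} ⊆ Ico s hi from fun t ht => by
      simp only [mem_filter, not_lt] at ht; simpa [ht.2] using (mem_Ico.mp (hSsub ht.1)).2)
  have hsplit := card_filter_add_card_filter_not (s := S) (· < s)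
  have hs' := mem_Ico.mp (hSsub hs)
  simp only [mem_Ico, compressAt]
  omega

lemma Sparse.card_filter_compress_lt (hS : Sparse S) {s : ℕ} (hs : s ∈ S) :
    #{t ∈ compress S | t < compressAt S s} = #{t ∈ S | t < s} := by
  rw [compress, filter_image]
  rw [card_image_of_injOn (hS.compressAt_strictMonoOn.injOn.mono (filter_subset _ _))]
  exact congrArg card <| filter_congr fun t ht => hS.compressAt_strictMonoOn.lt_iff_lt ht hs

lemma Sparse.image_compress (hS : Sparse S) :
    (compress S).image (fun t => t + #{u ∈ compress S | u < t}) = S := by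
  change (S.image (compressAt S)).image _ = S
  rw [image_image]
  refine (image_congr fun s hs => ?_).trans image_id
  rw [Function.comp_apply, hS.card_filter_compress_lt hs, id, compressAt]
  have := card_filter_lt_le (S := S) s
  omega

lemma compress_injOn : Set.InjOn compress {S | Sparse S} := by
  intro S hS T hT h
  rw [← Sparse.image_compress hS, ← Sparse.image_compress hT, h]

theorem card_le_choose_of_sparse {𝒜 : Finset (Finset ℕ)} {lo hi j : ℕ}
    (h𝒜 : ∀ S ∈ 𝒜, Sparse S ∧ S ⊆ Ico lo hi ∧ #S = j) :
    #𝒜 ≤ (hi + 1 - j - lo).choose j := by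
  have hmaps : ∀ S ∈ 𝒜, compress S ∈ (Ico lo (hi + 1 - j)).powersetCard j := by
    intro S hS
    obtain ⟨hsp, hsub, rfl⟩ := h𝒜 S hS
    exact mem_powersetCard.mpr ⟨compress_subset_Ico hsub, hsp.card_compress⟩
  have := card_le_card_of_injOn compress hmaps
    (compress_injOn.mono fun S hS => (h𝒜 S hS).1)
  rwa [card_powersetCard, Nat.card_Ico] at this

end Sparse

lemma Stable.succ_ne {n a b : ℕ} {B : Finset ℕ} (hB : Stable n B) (ha : a ∈ B)
    (hb : b ∈ B) : a + 1 ≠ b :=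
  fun h => hB.1 a ha (h ▸ hb)

lemma Stable.not_one_and_eq {n a b : ℕ} {B : Finset ℕ} (hB : Stable n B) (ha : a ∈ B)
    (hb : b ∈ B) : ¬(a = 1 ∧ b = n) :=
  fun ⟨h, h'⟩ => hB.2 ⟨h ▸ ha, h' ▸ hb⟩

-- Read the cycle from `x` onwards and close up the gap left by `y` and its two neighbours.
def unwind (n x y s : ℕ) : ℕ :=
  if s < x then s + n - 2 else if s < y then s else s - 2

section Unwind

variable {n x y : ℕ} {B B' : Finset ℕ}

lemma unwind_mem_Ico (hBn : B ⊆ Icc 1 n) (hB : Stable n B) (hx : x ∈ B) (hy : y ∈ B)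
    (hxy : x < y) {s : ℕ} (hs : s ∈ B \ {x, y}) :
    unwind n x y s ∈ Ico (x + 2) (x + n - 3) := by
  simp only [mem_sdiff, mem_insert, mem_singleton, not_or] at hs
  have := mem_Icc.mp (hBn hs.1)
  have := mem_Icc.mp (hBn hx)
  have := mem_Icc.mp (hBn hy)
  have := hB.succ_ne hs.1 hx
  have := hB.succ_ne hx hs.1
  have := hB.succ_ne hs.1 hy
  have := hB.succ_ne hy hs.1
  have := hB.succ_ne hx hy
  have := hB.not_one_and_eq hx hs.1
  have := hB.not_one_and_eq hs.1 hy
  have := hB.not_one_and_eq hx hy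
  simp only [mem_Ico, unwind]
  split_ifs <;> omega

lemma unwind_eq_unwind (hBn : B ⊆ Icc 1 n) (hB : Stable n B) (hy : y ∈ B)
    (hB'n : B' ⊆ Icc 1 n) (hB' : Stable n B') (hy' : y ∈ B') (hxy : x < y)
    {s s' : ℕ} (hs : s ∈ B \ {x, y}) (hs' : s' ∈ B' \ {x, y})
    (h : unwind n x y s = unwind n x y s') : s = s' := by
  simp only [mem_sdiff, mem_insert, mem_singleton, not_or] at hs hs'
  have := mem_Icc.mp (hBn hs.1)
  have := mem_Icc.mp (hB'n hs'.1)
  have := mem_Icc.mp (hBn hy)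
  have := hB.succ_ne hs.1 hy
  have := hB.succ_ne hy hs.1
  have := hB'.succ_ne hs'.1 hy'
  have := hB'.succ_ne hy' hs'.1
  have := hB.not_one_and_eq hs.1 hy
  have := hB'.not_one_and_eq hs'.1 hy'
  simp only [unwind] at h
  split_ifs at h <;> omega

lemma sparse_image_unwind (hBn : B ⊆ Icc 1 n) (hB : Stable n B) (hy : y ∈ B) (hxy : x < y) :
    Sparse ((B \ {x, y}).image (unwind n x y)) := by
  intro t ht ht'
  obtain ⟨s, hs, rfl⟩ := mem_image.mp ht
  obtain ⟨s', hs', h⟩ := mem_image.mp ht'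
  simp only [mem_sdiff, mem_insert, mem_singleton, not_or] at hs hs'
  have := mem_Icc.mp (hBn hs.1)
  have := mem_Icc.mp (hBn hs'.1)
  have := mem_Icc.mp (hBn hy)
  have := hB.succ_ne hs.1 hs'.1
  have := hB.succ_ne hs.1 hy
  have := hB.succ_ne hy hs'.1
  have := hB.not_one_and_eq hs'.1 hs.1
  have := hB.not_one_and_eq hs'.1 hy
  simp only [unwind] at h
  split_ifs at h <;> omega

lemma subset_of_image_unwind_subset (hBn : B ⊆ Icc 1 n) (hB : Stable n B) (hx : x ∈ B)
    (hy : y ∈ B) (hB'n : B' ⊆ Icc 1 n) (hB' : Stable n B') (hx' : x ∈ B') (hy' : y ∈ B')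
    (hxy : x < y) (h : (B \ {x, y}).image (unwind n x y) ⊆ (B' \ {x, y}).image (unwind n x y)) :
    B ⊆ B' := by
  intro s hs
  by_cases hsxy : s ∈ ({x, y} : Finset ℕ)
  · rcases mem_insert.mp hsxy with rfl | hsy
    · exact hx'
    · exact mem_singleton.mp hsy ▸ hy'
  have hs₀ : s ∈ B \ {x, y} := mem_sdiff.mpr ⟨hs, hsxy⟩
  obtain ⟨s', hs', he⟩ := mem_image.mp (h (mem_image_of_mem _ hs₀))
  rw [unwind_eq_unwind hBn hB hy hB'n hB' hy' hxy hs₀ hs' he.symm]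
  exact (mem_sdiff.mp hs').1

end Unwind

lemma mem_stableSets {n k : ℕ} {B : Finset ℕ} :
    B ∈ stableSets n k ↔ (B ⊆ Icc 1 n ∧ #B = k) ∧ Stable n B := by
  rw [stableSets, mem_filter, mem_powersetCard]

theorem card_filter_mem_and_mem_le {n k x y : ℕ} (hk : 2 ≤ k) (hxy : x < y) :
    #{B ∈ stableSets n k | x ∈ B ∧ y ∈ B} ≤ (n - k - 2).choose (k - 2) := by
  set G := {B ∈ stableSets n k | x ∈ B ∧ y ∈ B}
  have hG : ∀ B ∈ G, (B ⊆ Icc 1 n ∧ #B = k) ∧ Stable n B ∧ x ∈ B ∧ y ∈ B := by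
    intro B hB
    rw [mem_filter, mem_stableSets] at hB
    exact ⟨hB.1.1, hB.1.2, hB.2⟩
  have hinj : Set.InjOn (fun B : Finset ℕ => (B \ {x, y}).image (unwind n x y)) G := by
    intro B hB B' hB' h
    obtain ⟨⟨hBn, -⟩, hBs, hx, hy⟩ := hG B hB
    obtain ⟨⟨hB'n, -⟩, hB's, hx', hy'⟩ := hG B' hB'
    exact (subset_of_image_unwind_subset hBn hBs hx hy hB'n hB's hx' hy' hxy h.le).antisymm
      (subset_of_image_unwind_subset hB'n hB's hx' hy' hBn hBs hx hy hxy h.ge)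
  rw [← card_image_of_injOn hinj, show n - k - 2 = x + n - 3 + 1 - (k - 2) - (x + 2) by omega]
  refine card_le_choose_of_sparse fun S hS => ?_
  obtain ⟨B, hB, rfl⟩ := mem_image.mp hS
  obtain ⟨⟨hBn, hBk⟩, hBs, hx, hy⟩ := hG B hB
  refine ⟨sparse_image_unwind hBn hBs hy hxy, fun t ht => ?_, ?_⟩
  · obtain ⟨s, hs, rfl⟩ := mem_image.mp ht
    exact unwind_mem_Ico hBn hBs hx hy hxy hs
  · rw [card_image_of_injOn fun s hs s' hs' h =>
      unwind_eq_unwind hBn hBs hy hBn hBs hy hxy hs hs' h,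
      card_sdiff_of_subset (insert_subset hx (singleton_subset_iff.mpr hy)),
      card_pair hxy.ne, hBk]

theorem card_le_sq_mul_of_intersecting {α : Type*} [DecidableEq α] {F : Finset (Finset α)}
    {k m : ℕ}
    (hcard : ∀ A ∈ F, #A = k) (hint : ∀ A ∈ F, ∀ B ∈ F, (A ∩ B).Nonempty)
    (hnontriv : ¬ ∃ x, ∀ A ∈ F, x ∈ A)
    (hpair : ∀ x y, x ≠ y → #{B ∈ F | x ∈ B ∧ y ∈ B} ≤ m) :
    #F ≤ k ^ 2 * m := by
  obtain rfl | ⟨A, hA⟩ := F.eq_empty_or_nonempty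
  · simp
  push Not at hnontriv
  choose avoid havoid_mem hnot_mem using hnontriv
  have hcover :
      F ⊆ A.biUnion fun x => (avoid x).biUnion fun y => {B ∈ F | x ∈ B ∧ y ∈ B} := by
    intro B hB
    obtain ⟨x, hx⟩ := hint A hA B hB
    obtain ⟨y, hy⟩ := hint (avoid x) (havoid_mem x) B hB
    rw [mem_inter] at hx hy
    simp only [mem_biUnion, mem_filter]
    exact ⟨x, hx.1, y, hy.1, hB, hx.2, hy.2⟩
  have hfiber : ∀ x, #((avoid x).biUnion fun y => {B ∈ F | x ∈ B ∧ y ∈ B}) ≤ k * m :=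
    fun x => hcard _ (havoid_mem x) ▸ card_biUnion_le_card_mul _ _ _ fun y hy =>
      hpair x y fun h => hnot_mem y (by rwa [h] at hy)
  calc #F ≤ #A * (k * m) :=
        (card_le_card hcover).trans (card_biUnion_le_card_mul _ _ _ fun x _ => hfiber x)
    _ = k ^ 2 * m := by rw [hcard A hA]; ring

theorem stmt_5_general (n k : ℕ) (hk : 2 ≤ k) (F : Finset (Finset ℕ))
    (hF : F ⊆ stableSets n k)
    (hint : ∀ A ∈ F, ∀ B ∈ F, (A ∩ B).Nonempty)
    (hnontriv : ¬ ∃ x, ∀ A ∈ F, x ∈ A) :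
    F.card ≤ k ^ 2 * Nat.choose (n - k - 2) (k - 2) := by
  refine card_le_sq_mul_of_intersecting (fun A hA => (mem_stableSets.mp (hF hA)).1.2) hint
    hnontriv fun x y hxy => ?_
  have hsub : ∀ x y,
      {B ∈ F | x ∈ B ∧ y ∈ B} ⊆ {B ∈ stableSets n k | x ∈ B ∧ y ∈ B} :=
    fun x y => filter_subset_filter _ hF
  rcases hxy.lt_or_gt with hlt | hgt
  · exact (card_le_card (hsub x y)).trans (card_filter_mem_and_mem_le hk hlt)
  · rw [filter_congr fun B _ => and_comm]
    exact (card_le_card (hsub y x)).trans (card_filter_mem_and_mem_le hk hgt)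

theorem stmt_5 (n k : ℕ) (hk : 2 ≤ k) (hn : 2 * k ≤ n) (F : Finset (Finset ℕ))
    (hF : F ⊆ stableSets n k)
    (hint : ∀ A ∈ F, ∀ B ∈ F, (A ∩ B).Nonempty)
    (hnontriv : ¬ ∃ x, ∀ A ∈ F, x ∈ A) :
    F.card ≤ k ^ 2 * Nat.choose (n - k - 2) (k - 2) :=
  stmt_5_general n k hk F hF hint hnontriv
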